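/- For every 2-CNF theory S with At(S) ≠ ∅ there exists a cover 𝒜 for S, each of whose members is a nonempty consistent set of literals over At(S), such that ∑_{A ∈ 𝒜} 3^(−|At(A)|/3) ≤ 1, where At(A) denotes the set of atoms occurring in the literals of A. -/

import Mathlib

open Classical

/-- A literal: `(true, a)` is the atom `a`, `(false, a)` is the negated atom `¬ a`. -/
abbrev Lit : Type := Bool × ℕ

/-- A clause: a finite set of literals, viewed as the disjunction of its literals. -/
abbrev Clause : Type := Finset Lit

/-- A CNF theory: a finite set of clauses. -/
abbrev CTheory : Type := Finset Clause

/-- A clause is proper: it contains no atom together with its negation. -/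
def Clause.ok (c : Clause) : Prop :=
  ∀ a : ℕ, ¬ (((true, a) : Lit) ∈ c ∧ ((false, a) : Lit) ∈ c)

/-- The set of atoms occurring in a clause. -/
def clauseAtoms (c : Clause) : Finset ℕ := c.image Prod.snd

/-- `At(T)`: the set of atoms occurring in a CNF theory. -/
def thAtoms (T : CTheory) : Finset ℕ := T.sup clauseAtoms

/-- A set of atoms `M` satisfies a literal `l`. -/
def satLit (M : Finset ℕ) (l : Lit) : Prop := if l.1 then l.2 ∈ M else l.2 ∉ M

/-- `M` is a model of the CNF theory `T`. -/
def isModel (M : Finset ℕ) (T : CTheory) : Prop := ∀ c ∈ T, ∃ l ∈ c, satLit M l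

/-- `M` is a minimal model of `T`: a model `M ⊆ At(T)` no proper subset of which is a model. -/
def isMinModel (M : Finset ℕ) (T : CTheory) : Prop :=
  isModel M T ∧ M ⊆ thAtoms T ∧ ∀ M' : Finset ℕ, M' ⊂ M → ¬ isModel M' T

/-- The dual of a literal. -/
def litNeg (l : Lit) : Lit := (!l.1, l.2)

/-- `L̄`: the set of duals of the literals of `L`. -/
def negSet (L : Finset Lit) : Finset Lit := L.image litNeg

/-- `L⁺`: the set of atoms belonging to `L`. -/
def posAtoms (L : Finset Lit) : Finset ℕ := (L.filter (fun l => l.1 = true)).image Prod.snd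

/-- `L⁻`: the set of atoms whose negation belongs to `L`. -/
def negAtoms (L : Finset Lit) : Finset ℕ := (L.filter (fun l => l.1 = false)).image Prod.snd

/-- A set of atoms `M` is consistent with a set of literals `L` if `L⁺ ⊆ M` and `L⁻ ∩ M = ∅`. -/
def consistentWith (M : Finset ℕ) (L : Finset Lit) : Prop :=
  posAtoms L ⊆ M ∧ ∀ a ∈ negAtoms L, a ∉ M

/-- `Lit(T)`: the set of all literals over the atoms of `T`. -/
def litsOf (T : CTheory) : Finset Lit :=
  (thAtoms T).image (fun a => ((true, a) : Lit)) ∪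
    (thAtoms T).image (fun a => ((false, a) : Lit))

/-- `T_L = {c \ L̄ : c ∈ T, c ∩ L = ∅}`. -/
def reduceTh (T : CTheory) (L : Finset Lit) : CTheory :=
  (T.filter (fun c => ∀ l ∈ c, l ∉ L)).image (fun c => c \ negSet L)

/-!
Fix a partial assignment `L` and let `R` be the atoms of `S` it leaves free. If `R ≠ ∅`, the
minimal models consistent with `L` can be split among branches `L ∪ E`, `E ∈ ℰ`, where the `E`
are literal sets over `R` with `∑_{E ∈ ℰ} 3^(-|At(E)|/3) ≤ 1`. Either some literal over `R` holds
in all these models (one branch); or some free atom `a` occurs in clauses `a ∨ l₁` and `¬a ∨ l₂`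
over free atoms (branches `{a, l₂}` and `{¬a, l₁}`); or else, by minimality, each free atom `a`
of such a model `M` has a neighbour `y ∉ M` in the graph on `R` whose edges are the clauses
`a ∨ y`. In the last case, for `x` of minimum degree `d`, the branches `{¬y} ∪ N(y)` with
`y ∈ {x} ∪ N(x)` are at most `d + 1` sets of at least `d + 1` atoms each. As `k · 3^(-k/3) ≤ 1`,
induction on `|R|` bounds the number of minimal models of `S` by `3^(|At(S)|/3)`, and the sets of
literals true in them form the required cover.
-/

open Finset

section Satisfaction

variable {T : CTheory} {M : Finset ℕ} {L : Finset Lit} {a : ℕ} {l : Lit}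

@[simp] theorem satLit_true : satLit M (true, a) ↔ a ∈ M := Iff.rfl

@[simp] theorem satLit_false : satLit M (false, a) ↔ a ∉ M := Iff.rfl

theorem satLit_litNeg : satLit M (litNeg l) ↔ ¬ satLit M l := by
  obtain ⟨_ | _, x⟩ := l <;> simp [litNeg]

theorem satLit_erase (h : l.2 ≠ a) : satLit (M.erase a) l ↔ satLit M l := by
  obtain ⟨_ | _, x⟩ := l <;> simp_all [mem_erase]

@[simp] theorem mem_posAtoms : a ∈ posAtoms L ↔ (true, a) ∈ L := by simp [posAtoms]

@[simp] theorem mem_negAtoms : a ∈ negAtoms L ↔ (false, a) ∈ L := by simp [negAtoms]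

theorem consistentWith_iff : consistentWith M L ↔ ∀ l ∈ L, satLit M l := by
  constructor
  · rintro ⟨hpos, hneg⟩ ⟨_ | _, x⟩ hl
    · exact satLit_false.2 (hneg x (mem_negAtoms.2 hl))
    · exact satLit_true.2 (hpos (mem_posAtoms.2 hl))
  · intro h
    exact ⟨fun x hx => satLit_true.1 (h _ (mem_posAtoms.1 hx)),
      fun x hx => satLit_false.1 (h _ (mem_negAtoms.1 hx))⟩

theorem consistentWith_union {L' : Finset Lit} :
    consistentWith M (L ∪ L') ↔ consistentWith M L ∧ consistentWith M L' := by
  simp only [consistentWith_iff, mem_union, or_imp, forall_and]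

theorem consistentWith.disjoint_posAtoms_negAtoms (h : consistentWith M L) :
    Disjoint (posAtoms L) (negAtoms L) :=
  disjoint_left.2 fun a hpos hneg => h.2 a hneg (h.1 hpos)

theorem mem_thAtoms {c : Clause} (hc : c ∈ T) (hl : l ∈ c) : l.2 ∈ thAtoms T :=
  mem_sup.2 ⟨c, hc, mem_image_of_mem _ hl⟩

theorem mem_litsOf : l ∈ litsOf T ↔ l.2 ∈ thAtoms T := by
  obtain ⟨_ | _, x⟩ := l <;> simp [litsOf]

theorem isModel.satLit_of_pair_mem {l' : Lit} (hM : isModel M T) (h : {l, l'} ∈ T)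
    (hl : ¬ satLit M l) : satLit M l' := by
  obtain ⟨l'', hl'', hsat⟩ := hM _ h
  rcases mem_insert.1 hl'' with rfl | hl''
  · exact absurd hsat hl
  · rwa [mem_singleton.1 hl''] at hsat

theorem isMinModel.exists_clause_falsified_by_erase (hM : isMinModel M T) (ha : a ∈ M) :
    ∃ c ∈ T, (true, a) ∈ c ∧ ∀ l ∈ c, ¬ satLit (M.erase a) l := by
  have hnot : ¬ isModel (M.erase a) T := hM.2.2 _ (erase_ssubset ha)
  simp only [isModel, not_forall, not_exists, not_and] at hnot
  obtain ⟨c, hc, hfalse⟩ := hnot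
  obtain ⟨⟨_ | _, x⟩, hl, hsat⟩ := hM.1 c hc
  · exact absurd (fun h => hsat (mem_of_mem_erase h)) (hfalse _ hl)
  · by_cases hxa : x = a
    · exact ⟨c, hc, hxa ▸ hl, hfalse⟩
    · exact absurd ((satLit_erase hxa).2 hsat) (hfalse _ hl)

end Satisfaction

theorem nat_cube_le_three_pow : ∀ k : ℕ, k ^ 3 ≤ 3 ^ k
  | 0 | 1 | 2 | 3 => by norm_num
  | k + 4 => by
    have ih := nat_cube_le_three_pow (k + 3)
    calc (k + 4) ^ 3 ≤ 3 * (k + 3) ^ 3 := by ring_nf; omega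
      _ ≤ 3 ^ (k + 4) := by rw [pow_succ 3 (k + 3)]; omega

theorem natCast_le_three_rpow (k : ℕ) : (k : ℝ) ≤ 3 ^ ((k : ℝ) / 3) := by
  have h : ((k : ℝ) ^ 3) ^ ((3 : ℕ)⁻¹ : ℝ) ≤ ((3 : ℝ) ^ k) ^ ((3 : ℕ)⁻¹ : ℝ) :=
    Real.rpow_le_rpow (by positivity) (by exact_mod_cast nat_cube_le_three_pow k) (by positivity)
  rwa [Real.pow_rpow_inv_natCast (Nat.cast_nonneg k) three_ne_zero, ← Real.rpow_natCast,
    ← Real.rpow_mul (by norm_num), ← div_eq_mul_inv, Nat.cast_ofNat] at h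

section Branching

variable {T : CTheory} {L : Finset Lit} {a : ℕ}

def freeAtoms (T : CTheory) (L : Finset Lit) : Finset ℕ := thAtoms T \ L.image Prod.snd

noncomputable def weight (A : Finset Lit) : ℝ := 3 ^ (-(#(A.image Prod.snd) : ℝ) / 3)

theorem sum_weight_le_one {ℰ : Finset (Finset Lit)} {k : ℕ} (hcard : #ℰ ≤ k)
    (hk : ∀ E ∈ ℰ, k ≤ #(E.image Prod.snd)) : ∑ E ∈ ℰ, weight E ≤ 1 := by
  calc ∑ E ∈ ℰ, weight E ≤ ∑ _E ∈ ℰ, (3 : ℝ) ^ (-(k : ℝ) / 3) :=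
        sum_le_sum fun E hE => Real.rpow_le_rpow_of_exponent_le (by norm_num) (by
          have : (k : ℝ) ≤ #(E.image Prod.snd) := by exact_mod_cast hk E hE
          linarith)
    _ = #ℰ * (3 : ℝ) ^ (-(k : ℝ) / 3) := by rw [sum_const, nsmul_eq_mul]
    _ ≤ k * (3 : ℝ) ^ (-(k : ℝ) / 3) := by gcongr
    _ = k / (3 : ℝ) ^ ((k : ℝ) / 3) := by
        rw [neg_div, Real.rpow_neg (by norm_num), ← div_eq_mul_inv]
    _ ≤ 1 := div_le_one_of_le₀ (natCast_le_three_rpow k) (by positivity)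

def IsBranching (T : CTheory) (L : Finset Lit) (ℰ : Finset (Finset Lit)) : Prop :=
  (∀ E ∈ ℰ, E.Nonempty ∧ E.image Prod.snd ⊆ freeAtoms T L) ∧
    (∀ M, isMinModel M T → consistentWith M L → ∃ E ∈ ℰ, consistentWith M E) ∧
    ∑ E ∈ ℰ, weight E ≤ 1

theorem isBranching_singleton {l : Lit} (hl : l.2 ∈ freeAtoms T L)
    (hforced : ∀ M, isMinModel M T → consistentWith M L → satLit M l) :
    IsBranching T L {{l}} := by
  refine ⟨?_, fun M hM hML => ⟨{l}, mem_singleton_self _, ?_⟩, sum_weight_le_one (k := 1) ?_ ?_⟩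
  · simpa using hl
  · simpa [consistentWith_iff] using hforced M hM hML
  · simp
  · simp

def IsFreePair (T : CTheory) (L : Finset Lit) (l l' : Lit) : Prop :=
  {l, l'} ∈ T ∧ l'.2 ∈ freeAtoms T L ∧ l'.2 ≠ l.2

theorem isBranching_pair {l₁ l₂ : Lit} (ha : a ∈ freeAtoms T L)
    (h₁ : IsFreePair T L (true, a) l₁) (h₂ : IsFreePair T L (false, a) l₂) :
    IsBranching T L {{(true, a), l₂}, {(false, a), l₁}} := by
  refine ⟨?_, fun M hM _ => ?_, sum_weight_le_one card_le_two ?_⟩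
  · simp only [mem_insert, mem_singleton]
    rintro E (rfl | rfl) <;>
      exact ⟨insert_nonempty _ _, by simp [insert_subset_iff, ha, h₁.2.1, h₂.2.1]⟩
  · by_cases haM : a ∈ M
    · refine ⟨_, mem_insert_self _ _, consistentWith_iff.2 ?_⟩
      simp only [mem_insert, mem_singleton]
      rintro l (rfl | rfl)
      · simpa
      · exact hM.1.satLit_of_pair_mem h₂.1 (by simpa)
    · refine ⟨_, mem_insert_of_mem (mem_singleton_self _), consistentWith_iff.2 ?_⟩
      simp only [mem_insert, mem_singleton]
      rintro l (rfl | rfl)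
      · simpa
      · exact hM.1.satLit_of_pair_mem h₁.1 (by simpa)
  · simp only [mem_insert, mem_singleton]
    rintro E (rfl | rfl) <;> rw [image_insert, image_singleton, card_pair_eq_two_iff.2]
    exacts [h₂.2.2.symm, h₁.2.2.symm]

def freeNeighbors (T : CTheory) (L : Finset Lit) (x : ℕ) : Finset ℕ :=
  (freeAtoms T L).filter fun y => y ≠ x ∧ {(true, x), (true, y)} ∈ T

def starLits (T : CTheory) (L : Finset Lit) (x : ℕ) : Finset Lit :=
  insert (false, x) ((freeNeighbors T L x).image fun y => (true, y))

theorem image_snd_starLits (x : ℕ) :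
    (starLits T L x).image Prod.snd = insert x (freeNeighbors T L x) := by
  simp [starLits, image_insert, image_image, Function.comp_def]

theorem consistentWith_starLits {M : Finset ℕ} {x : ℕ} (hM : isModel M T) (hx : x ∉ M) :
    consistentWith M (starLits T L x) := by
  rw [consistentWith_iff]
  simp only [starLits, mem_insert, mem_image]
  rintro l (rfl | ⟨y, hy, rfl⟩)
  · simpa
  · exact hM.satLit_of_pair_mem (mem_filter.1 hy).2.2 (by simpa)

theorem isBranching_starLits (ha : a ∈ freeAtoms T L)
    (hmin : ∀ b ∈ freeAtoms T L, #(freeNeighbors T L a) ≤ #(freeNeighbors T L b))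
    (hnb : ∀ M, isMinModel M T → consistentWith M L → a ∈ M →
      ∃ b ∈ freeNeighbors T L a, b ∉ M) :
    IsBranching T L ((insert a (freeNeighbors T L a)).image (starLits T L)) := by
  have hsub : insert a (freeNeighbors T L a) ⊆ freeAtoms T L :=
    insert_subset ha (filter_subset _ _)
  refine ⟨?_, fun M hM hML => ?_,
    sum_weight_le_one (k := #(freeNeighbors T L a) + 1)
      (card_image_le.trans (card_insert_le _ _)) ?_⟩
  · simp only [mem_image]
    rintro _ ⟨x, hx, rfl⟩
    refine ⟨insert_nonempty _ _, ?_⟩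
    rw [image_snd_starLits]
    exact insert_subset (hsub hx) (filter_subset _ _)
  · by_cases haM : a ∈ M
    · obtain ⟨b, hb, hbM⟩ := hnb M hM hML haM
      exact ⟨_, mem_image_of_mem _ (mem_insert_of_mem hb), consistentWith_starLits hM.1 hbM⟩
    · exact ⟨_, mem_image_of_mem _ (mem_insert_self _ _), consistentWith_starLits hM.1 haM⟩
  · simp only [mem_image]
    rintro _ ⟨x, hx, rfl⟩
    rw [image_snd_starLits, card_insert_of_notMem fun h => (mem_filter.1 h).2.1 rfl]
    exact Nat.succ_le_succ (hmin x (hsub hx))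

section Unforced

variable (hok : ∀ c ∈ T, Clause.ok c) (h2 : ∀ c ∈ T, #c ≤ 2)
  (hfree : ∀ l : Lit, l.2 ∈ freeAtoms T L →
    ∃ M, isMinModel M T ∧ consistentWith M L ∧ ¬ satLit M l)
include hok h2 hfree

theorem exists_isFreePair_not_satLit {M : Finset ℕ} (hM : isMinModel M T)
    (hML : consistentWith M L) (ha : a ∈ freeAtoms T L) (haM : a ∈ M) :
    ∃ l, IsFreePair T L (true, a) l ∧ ¬ satLit M l := by
  obtain ⟨c, hc, hac, hfalse⟩ := hM.exists_clause_falsified_by_erase haM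
  obtain ⟨M', hM', hM'L, haM'⟩ := hfree (true, a) ha
  -- otherwise `c` would force `a` into every minimal model consistent with `L`, such as `M'`
  obtain ⟨l, hl, hla, hlL⟩ : ∃ l ∈ c, l ≠ (true, a) ∧ litNeg l ∉ L := by
    by_contra! h
    obtain ⟨l, hl, hsat⟩ := hM'.1 c hc
    by_cases hla : l = (true, a)
    · exact haM' (hla ▸ hsat)
    · exact satLit_litNeg.1 (consistentWith_iff.1 hM'L _ (h l hl hla)) hsat
  have hceq : {(true, a), l} = c := eq_of_subset_of_card_le
    (insert_subset hac (singleton_subset_iff.2 hl))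
    ((h2 c hc).trans (card_pair_eq_two_iff.2 hla.symm).ge)
  have hl_ne : l.2 ≠ a := by
    obtain ⟨_ | _, x⟩ := l <;> rintro rfl
    · exact hok c hc x ⟨hac, hl⟩
    · exact hla rfl
  have hlM : ¬ satLit M l := fun h => hfalse l hl ((satLit_erase hl_ne).2 h)
  refine ⟨l, ⟨hceq ▸ hc, mem_sdiff.2 ⟨mem_thAtoms hc hl, fun hL => ?_⟩, hl_ne⟩, hlM⟩
  obtain ⟨l', hl'L, hl'⟩ := mem_image.1 hL
  obtain ⟨b, x⟩ := l
  obtain ⟨b', x'⟩ := l'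
  obtain rfl : x' = x := hl'
  by_cases hb : b' = b
  · exact hlM (hb ▸ consistentWith_iff.1 hML _ hl'L)
  · exact hlL (by cases b <;> cases b' <;> simp_all [litNeg])

theorem exists_freeNeighbor_not_mem
    (hpure : ∀ x ∈ freeAtoms T L, ∀ l₁ l₂,
      IsFreePair T L (true, x) l₁ → ¬ IsFreePair T L (false, x) l₂)
    {M : Finset ℕ} (hM : isMinModel M T) (hML : consistentWith M L) (ha : a ∈ freeAtoms T L)
    (haM : a ∈ M) : ∃ b ∈ freeNeighbors T L a, b ∉ M := by
  obtain ⟨⟨_ | _, x⟩, ⟨hc, hx, hxa⟩, hsat⟩ :=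
    exists_isFreePair_not_satLit hok h2 hfree hM hML ha haM
  · -- then `x ∈ M`, and the clause supporting `x` in `M` is a positive occurrence of `x`
    have hxM : x ∈ M := by simpa using hsat
    obtain ⟨l, hl, -⟩ := exists_isFreePair_not_satLit hok h2 hfree hM hML hx hxM
    exact absurd ⟨by rwa [pair_comm], ha, Ne.symm hxa⟩ (hpure x hx l (true, a) hl)
  · exact ⟨x, mem_filter.2 ⟨hx, hxa, hc⟩, by simpa using hsat⟩

end Unforced

theorem exists_isBranching (hok : ∀ c ∈ T, Clause.ok c) (h2 : ∀ c ∈ T, #c ≤ 2)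
    (hR : (freeAtoms T L).Nonempty) : ∃ ℰ, IsBranching T L ℰ := by
  by_cases hforced : ∃ l : Lit, l.2 ∈ freeAtoms T L ∧
      ∀ M, isMinModel M T → consistentWith M L → satLit M l
  · obtain ⟨l, hl, hforced⟩ := hforced
    exact ⟨_, isBranching_singleton hl hforced⟩
  push Not at hforced
  by_cases hmixed : ∃ x ∈ freeAtoms T L, ∃ l₁ l₂,
      IsFreePair T L (true, x) l₁ ∧ IsFreePair T L (false, x) l₂
  · obtain ⟨x, hx, l₁, l₂, h₁, h₂⟩ := hmixed
    exact ⟨_, isBranching_pair hx h₁ h₂⟩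
  push Not at hmixed
  obtain ⟨a, ha, hmin⟩ := exists_min_image _ (fun x => #(freeNeighbors T L x)) hR
  exact ⟨_, isBranching_starLits ha hmin fun M hM hML haM =>
    exists_freeNeighbor_not_mem hok h2 hforced hmixed hM hML ha haM⟩

end Branching

section Counting

variable {T : CTheory} {L : Finset Lit} {M : Finset ℕ}

noncomputable def minModelsWith (T : CTheory) (L : Finset Lit) : Finset (Finset ℕ) :=
  (thAtoms T).powerset.filter fun M => isMinModel M T ∧ consistentWith M L

theorem mem_minModelsWith : M ∈ minModelsWith T L ↔ isMinModel M T ∧ consistentWith M L := by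
  simp only [minModelsWith, mem_filter, mem_powerset]
  exact ⟨fun h => h.2, fun h => ⟨h.1.2.1, h⟩⟩

theorem freeAtoms_union (E : Finset Lit) :
    freeAtoms T (L ∪ E) = freeAtoms T L \ E.image Prod.snd := by
  rw [freeAtoms, freeAtoms, image_union, sdiff_sdiff_left, sup_eq_union]

theorem card_minModelsWith_le_one (hR : freeAtoms T L = ∅) : #(minModelsWith T L) ≤ 1 := by
  have hsub : ∀ {M M'}, M ∈ minModelsWith T L → M' ∈ minModelsWith T L → M ⊆ M' := by
    intro M M' hM hM' a ha
    rw [mem_minModelsWith] at hM hM'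
    have haL : a ∈ L.image Prod.snd := by
      by_contra h
      have ha' : a ∈ freeAtoms T L := mem_sdiff.2 ⟨hM.1.2.1 ha, h⟩
      exact notMem_empty a (hR ▸ ha')
    obtain ⟨⟨_ | _, x⟩, hl, rfl⟩ := mem_image.1 haL
    · exact absurd ha (satLit_false.1 (consistentWith_iff.1 hM.2 _ hl))
    · exact satLit_true.1 (consistentWith_iff.1 hM'.2 _ hl)
  exact card_le_one.2 fun M hM M' hM' => Subset.antisymm (hsub hM hM') (hsub hM' hM)

theorem card_minModelsWith_le (hok : ∀ c ∈ T, Clause.ok c) (h2 : ∀ c ∈ T, #c ≤ 2)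
    (L : Finset Lit) : (#(minModelsWith T L) : ℝ) ≤ 3 ^ ((#(freeAtoms T L) : ℝ) / 3) := by
  induction hn : #(freeAtoms T L) using Nat.strong_induction_on generalizing L with
  | _ n ih =>
  obtain hR | hR := (freeAtoms T L).eq_empty_or_nonempty
  · rw [hR, card_empty] at hn
    subst hn
    simpa using card_minModelsWith_le_one hR
  obtain ⟨ℰ, hℰ, hcover, hweight⟩ := exists_isBranching hok h2 hR
  have hstep : ∀ E ∈ ℰ, (#(minModelsWith T (L ∪ E)) : ℝ) ≤ 3 ^ ((n : ℝ) / 3) * weight E := by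
    intro E hE
    obtain ⟨hEne, hEsub⟩ := hℰ E hE
    have hle : #(E.image Prod.snd) ≤ n := hn ▸ card_le_card hEsub
    have hcard : #(freeAtoms T (L ∪ E)) = n - #(E.image Prod.snd) := by
      rw [freeAtoms_union, card_sdiff_of_subset hEsub, hn]
    calc (#(minModelsWith T (L ∪ E)) : ℝ)
        ≤ 3 ^ ((#(freeAtoms T (L ∪ E)) : ℝ) / 3) :=
          ih _ (by have := (hEne.image Prod.snd).card_pos; omega) (L ∪ E) rfl
      _ = 3 ^ ((n : ℝ) / 3) * weight E := by
          rw [weight, ← Real.rpow_add (by norm_num), hcard, Nat.cast_sub hle]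
          ring_nf
  have hsplit : minModelsWith T L ⊆ ℰ.biUnion fun E => minModelsWith T (L ∪ E) := by
    intro M hM
    rw [mem_minModelsWith] at hM
    obtain ⟨E, hE, hME⟩ := hcover M hM.1 hM.2
    exact mem_biUnion.2 ⟨E, hE, mem_minModelsWith.2 ⟨hM.1, consistentWith_union.2 ⟨hM.2, hME⟩⟩⟩
  calc (#(minModelsWith T L) : ℝ) ≤ ∑ E ∈ ℰ, (#(minModelsWith T (L ∪ E)) : ℝ) := by
        exact_mod_cast (card_le_card hsplit).trans card_biUnion_le
    _ ≤ ∑ E ∈ ℰ, 3 ^ ((n : ℝ) / 3) * weight E := sum_le_sum hstep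
    _ = 3 ^ ((n : ℝ) / 3) * ∑ E ∈ ℰ, weight E := (mul_sum _ _ _).symm
    _ ≤ 3 ^ ((n : ℝ) / 3) := mul_le_of_le_one_right (by positivity) hweight

theorem card_minModelsWith_empty_le (hok : ∀ c ∈ T, Clause.ok c) (h2 : ∀ c ∈ T, #c ≤ 2) :
    (#(minModelsWith T ∅) : ℝ) ≤ 3 ^ ((#(thAtoms T) : ℝ) / 3) := by
  simpa [freeAtoms] using card_minModelsWith_le hok h2 ∅

end Counting

section TrueLits

variable {T : CTheory} {M : Finset ℕ}

def trueLits (T : CTheory) (M : Finset ℕ) : Finset Lit :=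
  (thAtoms T).image fun a => (decide (a ∈ M), a)

theorem image_snd_trueLits : (trueLits T M).image Prod.snd = thAtoms T := by
  simp [trueLits, image_image, Function.comp_def]

theorem trueLits_nonempty (h : (thAtoms T).Nonempty) : (trueLits T M).Nonempty := by
  rw [← image_nonempty (f := Prod.snd), image_snd_trueLits]
  exact h

theorem trueLits_subset_litsOf : trueLits T M ⊆ litsOf T := fun _ hl =>
  mem_litsOf.2 (image_snd_trueLits (M := M) ▸ mem_image_of_mem _ hl)

theorem consistentWith_trueLits : consistentWith M (trueLits T M) := by
  rw [consistentWith_iff]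
  rintro _ hl
  obtain ⟨a, -, rfl⟩ := mem_image.1 hl
  by_cases h : a ∈ M <;> simp [h]

theorem sum_weight_image_trueLits (F : Finset (Finset ℕ)) :
    ∑ A ∈ F.image (trueLits T), weight A ≤ #F * 3 ^ (-(#(thAtoms T) : ℝ) / 3) := by
  have hweight : ∀ A ∈ F.image (trueLits T), weight A = 3 ^ (-(#(thAtoms T) : ℝ) / 3) := by
    intro A hA
    obtain ⟨M, -, rfl⟩ := mem_image.1 hA
    rw [weight, image_snd_trueLits]
  rw [sum_congr rfl hweight, sum_const, nsmul_eq_mul]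
  gcongr
  exact card_image_le

end TrueLits

/-- For every 2-CNF theory `S` with `At(S) ≠ ∅` there is a cover `𝒜` for `S` (a nonempty family
of nonempty consistent sets of literals over `At(S)` such that every minimal model of `S` is
consistent with some member) with `∑_{A ∈ 𝒜} 3^(−|At(A)|/3) ≤ 1`. -/
theorem two_cnf_cover (S : CTheory) (hok : ∀ c ∈ S, Clause.ok c)
    (h2 : ∀ c ∈ S, c.card ≤ 2) (hne : (thAtoms S).Nonempty) :
    ∃ 𝒜 : Finset (Finset Lit),
      𝒜.Nonempty ∧ (∅ : Finset Lit) ∉ 𝒜 ∧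
      (∀ A ∈ 𝒜, A ⊆ litsOf S ∧ A.Nonempty ∧ Disjoint (posAtoms A) (negAtoms A)) ∧
      (∀ M : Finset ℕ, isMinModel M S → ∃ A ∈ 𝒜, consistentWith M A) ∧
      ∑ A ∈ 𝒜, (3 : ℝ) ^ (-(((A.image Prod.snd).card : ℝ)) / 3) ≤ 1 := by
  set n : ℝ := (#(thAtoms S) : ℝ)
  -- an unsatisfiable `S` still needs a nonempty family
  obtain ⟨F, hFne, hF, hFcard⟩ : ∃ F : Finset (Finset ℕ),
      F.Nonempty ∧ minModelsWith S ∅ ⊆ F ∧ (#F : ℝ) ≤ 3 ^ (n / 3) := by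
    obtain h | h := (minModelsWith S ∅).eq_empty_or_nonempty
    · exact ⟨{(∅ : Finset ℕ)}, singleton_nonempty _, by simp [h],
        by simpa using Real.one_le_rpow (by norm_num) (by positivity)⟩
    · exact ⟨_, h, subset_rfl, card_minModelsWith_empty_le hok h2⟩
  refine ⟨F.image (trueLits S), hFne.image _, fun h => ?_, ?_, fun M hM => ?_, ?_⟩
  · obtain ⟨M, -, hM⟩ := mem_image.1 h
    exact not_nonempty_empty (hM ▸ trueLits_nonempty hne)
  · rintro _ hA
    obtain ⟨M, -, rfl⟩ := mem_image.1 hA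
    exact ⟨trueLits_subset_litsOf, trueLits_nonempty hne,
      consistentWith_trueLits.disjoint_posAtoms_negAtoms⟩
  · have hM' : M ∈ minModelsWith S ∅ := mem_minModelsWith.2 ⟨hM, by simp [consistentWith_iff]⟩
    exact ⟨_, mem_image_of_mem _ (hF hM'), consistentWith_trueLits⟩
  · calc _ ≤ #F * (3 : ℝ) ^ (-n / 3) := sum_weight_image_trueLits F
      _ ≤ 3 ^ (n / 3) * 3 ^ (-n / 3) := by gcongr
      _ = 1 := by rw [← Real.rpow_add (by norm_num), neg_div, add_neg_cancel, Real.rpow_zero]
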